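/- Let A be an n×n real symmetric positive semidefinite matrix, B an n×n real symmetric positive definite matrix, let y ∈ ℝⁿ be nonzero with y_i = 0 for some index i, and define R̃(α) = R(y + α e_i), q₁₂ = A_{ii}(By)_i − B_{ii}(Ay)_i, and q₁₃ = A_{ii}(yᵀBy) − B_{ii}(yᵀAy). If q₁₂ = 0 and q₁₃ > 0, then R̃(α) < A_{ii}/B_{ii} for every α ∈ ℝ, and the supremum of R̃ over ℝ equals A_{ii}/B_{ii} (so the supremum is not attained). -/

import Mathlib

open Matrix Filter Topology

/-!
Along the line `y + α eᵢ` both quadratic forms are quadratics in `α`, and since `yᵢ = 0` the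
vector never vanishes, so the denominator stays positive. The condition `q₁₂ = 0` makes the
linear terms proportional, which turns the quotient into
`R̃(α) = Aᵢᵢ / Bᵢᵢ - q₁₃ / (Bᵢᵢ · (y + α eᵢ)ᵀ B (y + α eᵢ))`: it stays strictly below
`Aᵢᵢ / Bᵢᵢ` and tends to it as `α → ∞`, because the denominator grows like `α² Bᵢᵢ`.
-/

variable {ι R : Type*} [DecidableEq ι]

theorem add_smul_single_ne_zero [Ring R] {y : ι → R} (hy : y ≠ 0) {i : ι} (hyi : y i = 0)
    (α : R) : y + α • Pi.single i 1 ≠ 0 := by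
  obtain ⟨j, hj⟩ := Function.ne_iff.mp hy
  have hji : j ≠ i := by rintro rfl; exact hj hyi
  intro h
  exact hj (by simpa [Pi.single_apply, hji] using congrFun h j)

namespace Matrix

theorem IsSymm.dotProduct_mulVec_add_smul_single [Fintype ι] [CommRing R] {M : Matrix ι ι R}
    (hM : M.IsSymm) (y : ι → R) (i : ι) (α : R) :
    (y + α • Pi.single i 1) ⬝ᵥ M *ᵥ (y + α • Pi.single i 1) =
      y ⬝ᵥ M *ᵥ y + 2 * α * (M *ᵥ y) i + α ^ 2 * M i i := by
  have hcross : y ⬝ᵥ M.col i = (M *ᵥ y) i := by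
    rw [← mulVec_single_one, dotProduct_mulVec, ← mulVec_transpose, hM.eq, dotProduct_single_one]
  simp only [mulVec_add, mulVec_smul, dotProduct_add, add_dotProduct, dotProduct_smul,
    smul_dotProduct, smul_eq_mul, single_one_dotProduct, mulVec_single_one, hcross, col_apply]
  ring

end Matrix

theorem tendsto_quadratic_atTop {a b c : ℝ} (hc : 0 < c) :
    Tendsto (fun x : ℝ => a + 2 * x * b + x ^ 2 * c) atTop atTop := by
  have : Tendsto (fun x : ℝ => x * (x * c + 2 * b)) atTop atTop :=
    tendsto_id.atTop_mul_atTop₀ (tendsto_atTop_add_const_right _ _ (tendsto_id.atTop_mul_const hc))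
  exact (tendsto_atTop_add_const_left _ a this).congr fun x => by ring

theorem isLUB_range_sub_div_of_tendsto_atTop {κ : Type*} {l : Filter κ} [l.NeBot]
    {g : κ → ℝ} (hg : Tendsto g l atTop) (hg_pos : ∀ x, 0 < g x) (L : ℝ) {c : ℝ} (hc : 0 < c) :
    (∀ x, L - c / g x < L) ∧ IsLUB (Set.range fun x => L - c / g x) L := by
  have hlt : ∀ x, L - c / g x < L := fun x => sub_lt_self L (div_pos hc (hg_pos x))
  refine ⟨hlt, isLUB_of_mem_closure ?_ ?_⟩
  · rintro _ ⟨x, rfl⟩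
    exact (hlt x).le
  · have : Tendsto (fun x => L - c / g x) l (𝓝 (L - 0)) :=
      tendsto_const_nhds.sub (tendsto_const_nhds.div_atTop hg)
    exact mem_closure_of_tendsto (by simpa using this) (Eventually.of_forall fun x => ⟨x, rfl⟩)

theorem quadratic_div_quadratic_eq_sub {a₀ a₁ a₂ b₀ b₁ b₂ : ℝ} (hb₂ : b₂ ≠ 0)
    (h : a₂ * b₁ - b₂ * a₁ = 0) (x : ℝ) (hD : b₀ + 2 * x * b₁ + x ^ 2 * b₂ ≠ 0) :
    (a₀ + 2 * x * a₁ + x ^ 2 * a₂) / (b₀ + 2 * x * b₁ + x ^ 2 * b₂) =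
      a₂ / b₂ - (a₂ * b₀ - b₂ * a₀) / (b₂ * (b₀ + 2 * x * b₁ + x ^ 2 * b₂)) := by
  field_simp
  linear_combination (-2 * x) * h

/-- If `q₁₂ = 0` and `q₁₃ > 0`, then `R̃(α) < A_{ii}/B_{ii}` for every `α`, and the
supremum of `R̃` over ℝ is `A_{ii}/B_{ii}` (hence unattained). -/
theorem rayleigh_sup_of_q12_zero_q13_pos {n : ℕ} (A B : Matrix (Fin n) (Fin n) ℝ)
    (hA : A.PosSemidef) (hB : B.PosDef) (y : Fin n → ℝ) (hy : y ≠ 0)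
    (i : Fin n) (hyi : y i = 0)
    (hq12 : A i i * B.mulVec y i - B i i * A.mulVec y i = 0)
    (hq13 : 0 < A i i * (y ⬝ᵥ B.mulVec y) - B i i * (y ⬝ᵥ A.mulVec y)) :
    (∀ α : ℝ,
      ((y + α • (Pi.single i 1 : Fin n → ℝ)) ⬝ᵥ
          A.mulVec (y + α • (Pi.single i 1 : Fin n → ℝ))) /
        ((y + α • (Pi.single i 1 : Fin n → ℝ)) ⬝ᵥ
          B.mulVec (y + α • (Pi.single i 1 : Fin n → ℝ)))
      < A i i / B i i) ∧
    IsLUB (Set.range fun α : ℝ =>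
        ((y + α • (Pi.single i 1 : Fin n → ℝ)) ⬝ᵥ
            A.mulVec (y + α • (Pi.single i 1 : Fin n → ℝ))) /
          ((y + α • (Pi.single i 1 : Fin n → ℝ)) ⬝ᵥ
            B.mulVec (y + α • (Pi.single i 1 : Fin n → ℝ))))
      (A i i / B i i) := by
  have hAsymm : A.IsSymm := isHermitian_iff_isSymm.mp hA.isHermitian
  have hBsymm : B.IsSymm := isHermitian_iff_isSymm.mp hB.isHermitian
  have hBii : 0 < B i i := hB.diag_pos
  have hden : ∀ α : ℝ, 0 < y ⬝ᵥ B *ᵥ y + 2 * α * (B *ᵥ y) i + α ^ 2 * B i i := fun α => by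
    have := hB.dotProduct_mulVec_pos (add_smul_single_ne_zero hy hyi α)
    rwa [star_trivial, hBsymm.dotProduct_mulVec_add_smul_single] at this
  simp only [hAsymm.dotProduct_mulVec_add_smul_single, hBsymm.dotProduct_mulVec_add_smul_single,
    fun α => quadratic_div_quadratic_eq_sub (a₀ := y ⬝ᵥ A *ᵥ y) (a₁ := (A *ᵥ y) i) hBii.ne' hq12 α
      (hden α).ne']
  exact isLUB_range_sub_div_of_tendsto_atTop ((tendsto_quadratic_atTop hBii).const_mul_atTop hBii)
    (fun α => mul_pos hBii (hden α)) _ hq13
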